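/- Let f be continuous on the closed unit disc and n ∈ ℕ, and let F(z) = f(z)/(1-|z|²)^n on Δ. For α ∈ Δ and a circle Γ ⊂ Δ with hyperbolic center α, the function z ↦ (z - c(Γ))^n f(z) extends holomorphically from Γ (through the disc bounded by Γ) if and only if the function z ↦ (z-α)^n F(z) extends holomorphically from Γ, where c(Γ) is the Euclidean center of Γ. -/

import Mathlib

/-! On `Γ = M_α(R𝕋)` one has `|z - α| = R |1 - ᾱz|`, so `Γ` is an Apollonius circle; expanding
this equation shows that its Euclidean center is `c = μα` with `μ = (1 - R²)/(1 - |α|²R²)` and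
that on `Γ`
  `(1 - |z|²)(z - c) = μ (z - α)(1 - ᾱz)`.
Hence on `Γ` the two boundary functions differ by the factor `(μ(1 - ᾱz))ⁿ`, which is
holomorphic and zero-free on the closed disc bounded by `Γ` (a disc inside `Δ`, being the convex
hull of `Γ`); multiplying or dividing a holomorphic extension by it gives the other one. -/

open Complex Metric ComplexConjugate

theorem Metric.eq_of_sphere_subset_sphere {E : Type*} [NormedAddCommGroup E] [NormedSpace ℝ E]
    {c c' : E} {ρ ρ' : ℝ} (hρ : 0 < ρ) (h : sphere c ρ ⊆ sphere c' ρ') : c = c' := by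
  by_contra hne
  have hd : 0 < ‖c - c'‖ := norm_pos_iff.mpr (sub_ne_zero.mpr hne)
  set t := ρ / ‖c - c'‖
  have ht : 0 < t := div_pos hρ hd
  have hv : ‖t • (c - c')‖ = ρ := by
    rw [norm_smul, Real.norm_of_nonneg ht.le, div_mul_cancel₀ _ hd.ne']
  have hplus := h (show c + t • (c - c') ∈ sphere c ρ by simpa using hv)
  have hminus := h (show c - t • (c - c') ∈ sphere c ρ by simpa using hv)
  rw [mem_sphere_iff_norm] at hplus hminus
  rw [show c + t • (c - c') - c' = (1 + t) • (c - c') by module, norm_smul,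
    Real.norm_of_nonneg (by linarith)] at hplus
  rw [show c - t • (c - c') - c' = (1 - t) • (c - c') by module, norm_smul, Real.norm_eq_abs,
    ← hplus] at hminus
  rcases abs_cases (1 - t) with ⟨h1, -⟩ | ⟨h1, -⟩ <;> rw [h1] at hminus <;> nlinarith

def HasHolomorphicExtension (u : ℂ → ℂ) (c : ℂ) (ρ : ℝ) : Prop :=
  ∃ g : ℂ → ℂ, ContinuousOn g (closedBall c ρ) ∧ DifferentiableOn ℂ g (ball c ρ) ∧
    ∀ z ∈ sphere c ρ, g z = u z

namespace HasHolomorphicExtension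

variable {u v h : ℂ → ℂ} {c : ℂ} {ρ : ℝ}

theorem of_eqOn_mul (hv : HasHolomorphicExtension v c ρ)
    (hh : DifferentiableOn ℂ h (closedBall c ρ)) (huv : Set.EqOn u (h * v) (sphere c ρ)) :
    HasHolomorphicExtension u c ρ := by
  obtain ⟨g, hgc, hgd, hgv⟩ := hv
  refine ⟨h * g, hh.continuousOn.mul hgc, (hh.mono ball_subset_closedBall).mul hgd,
    fun z hz => ?_⟩
  rw [huv hz, Pi.mul_apply, Pi.mul_apply, hgv z hz]

theorem iff_of_eqOn_mul (hh : DifferentiableOn ℂ h (closedBall c ρ))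
    (hh0 : ∀ z ∈ closedBall c ρ, h z ≠ 0) (huv : Set.EqOn u (h * v) (sphere c ρ)) :
    HasHolomorphicExtension u c ρ ↔ HasHolomorphicExtension v c ρ := by
  refine ⟨fun hu => hu.of_eqOn_mul (h := h⁻¹) (hh.inv hh0) fun z hz => ?_,
    fun hv => hv.of_eqOn_mul hh huv⟩
  rw [Pi.mul_apply, Pi.inv_apply, huv hz, Pi.mul_apply,
    inv_mul_cancel_left₀ (hh0 z (sphere_subset_closedBall hz))]

end HasHolomorphicExtension

noncomputable def mobius (α w : ℂ) : ℂ := (α - w) / (1 - conj α * w)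

theorem norm_one_sub_conj_mul_sq_sub_norm_sub_sq (α z : ℂ) :
    ‖1 - conj α * z‖ ^ 2 - ‖z - α‖ ^ 2 = (1 - ‖α‖ ^ 2) * (1 - ‖z‖ ^ 2) := by
  apply ofReal_injective
  push_cast
  simp only [← mul_conj', map_sub, map_mul, map_one, conj_conj]
  ring

section Mobius

variable {α z w : ℂ}

theorem one_sub_conj_mul_ne_zero (hα : ‖α‖ < 1) (hz : ‖z‖ ≤ 1) : 1 - conj α * z ≠ 0 := by
  intro h
  have : ‖conj α * z‖ = 1 := by rw [← sub_eq_zero.mp h, norm_one]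
  rw [norm_mul, norm_conj] at this
  nlinarith [norm_nonneg α, norm_nonneg z]

theorem norm_mobius_lt_one (hα : ‖α‖ < 1) (hw : ‖w‖ < 1) : ‖mobius α w‖ < 1 := by
  have hne := one_sub_conj_mul_ne_zero hα hw.le
  rw [mobius, norm_div, div_lt_one (norm_pos_iff.mpr hne), ← norm_neg, neg_sub]
  have hid := norm_one_sub_conj_mul_sq_sub_norm_sub_sq α w
  have hpos : 0 < (1 - ‖α‖ ^ 2) * (1 - ‖w‖ ^ 2) := by
    apply mul_pos <;> nlinarith [norm_nonneg α, norm_nonneg w]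
  nlinarith [norm_nonneg (w - α), norm_nonneg (1 - conj α * w)]

-- `mobius α (mobius α w) = w` with the denominator cleared.
theorem sub_mobius (hw : 1 - conj α * w ≠ 0) :
    α - mobius α w = w * (1 - conj α * mobius α w) := by
  rw [mobius]
  rw [mul_comm] at hw
  field_simp
  ring

theorem norm_mobius_sub (hα : ‖α‖ < 1) (hw : ‖w‖ < 1) :
    ‖mobius α w - α‖ = ‖w‖ * ‖1 - conj α * mobius α w‖ := by
  rw [← norm_neg, neg_sub, sub_mobius (one_sub_conj_mul_ne_zero hα hw.le), norm_mul]

end Mobius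

noncomputable def mobiusCircleScale (α : ℂ) (R : ℝ) : ℝ := (1 - R ^ 2) / (1 - ‖α‖ ^ 2 * R ^ 2)

section ApolloniusCircle

variable {α z : ℂ} {R : ℝ}

theorem mul_conj_sub_eq_of_norm_sub_eq (h : ‖z - α‖ = R * ‖1 - conj α * z‖) :
    (z - α) * (conj z - conj α) = R ^ 2 * ((1 - conj α * z) * (1 - α * conj z)) := by
  have hsq := congrArg (fun x : ℝ => (x : ℂ) ^ 2) h
  simp only [ofReal_mul, mul_pow, ← mul_conj', map_sub, map_mul, map_one, conj_conj] at hsq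
  exact hsq

theorem one_sub_norm_sq_mul_sq_pos (hα : ‖α‖ < 1) (hR0 : 0 ≤ R) (hR1 : R < 1) :
    0 < 1 - ‖α‖ ^ 2 * R ^ 2 := by
  have : ‖α‖ * R < 1 := by nlinarith [norm_nonneg α]
  nlinarith [mul_nonneg (norm_nonneg α) hR0]

theorem one_sub_sq_mul_mul_conj_ne_zero (hα : ‖α‖ < 1) (hR0 : 0 ≤ R) (hR1 : R < 1) :
    1 - (R : ℂ) ^ 2 * α * conj α ≠ 0 := by
  rw [mul_assoc, mul_conj', mul_comm]
  exact_mod_cast (one_sub_norm_sq_mul_sq_pos hα hR0 hR1).ne'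

theorem mobiusCircleScale_pos (hα : ‖α‖ < 1) (hR0 : 0 ≤ R) (hR1 : R < 1) :
    0 < mobiusCircleScale α R :=
  div_pos (by nlinarith) (one_sub_norm_sq_mul_sq_pos hα hR0 hR1)

theorem mem_sphere_of_norm_sub_eq (hα : ‖α‖ < 1) (hR0 : 0 ≤ R) (hR1 : R < 1)
    (h : ‖z - α‖ = R * ‖1 - conj α * z‖) :
    z ∈ sphere (mobiusCircleScale α R * α) (R * (1 - ‖α‖ ^ 2) / (1 - ‖α‖ ^ 2 * R ^ 2)) := by
  have hD := one_sub_norm_sq_mul_sq_pos hα hR0 hR1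
  have hρ : 0 ≤ R * (1 - ‖α‖ ^ 2) / (1 - ‖α‖ ^ 2 * R ^ 2) :=
    div_nonneg (mul_nonneg hR0 (by nlinarith [norm_nonneg α])) hD.le
  rw [mem_sphere_iff_norm, ← pow_left_inj₀ (norm_nonneg _) hρ two_ne_zero]
  apply ofReal_injective
  have hDc := one_sub_sq_mul_mul_conj_ne_zero hα hR0 hR1
  have hrel := mul_conj_sub_eq_of_norm_sub_eq h
  rw [ofReal_pow, ← mul_conj']
  simp only [mobiusCircleScale, map_sub, map_mul, conj_ofReal]
  push_cast
  rw [← mul_conj']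
  field_simp
  linear_combination (1 - α * conj α * R ^ 2) * hrel

theorem one_sub_norm_sq_mul_sub_center (hα : ‖α‖ < 1) (hR0 : 0 ≤ R) (hR1 : R < 1)
    (h : ‖z - α‖ = R * ‖1 - conj α * z‖) :
    (1 - (‖z‖ : ℂ) ^ 2) * (z - mobiusCircleScale α R * α) =
      mobiusCircleScale α R * (z - α) * (1 - conj α * z) := by
  have hDc := one_sub_sq_mul_mul_conj_ne_zero hα hR0 hR1
  have hrel := mul_conj_sub_eq_of_norm_sub_eq h
  simp only [mobiusCircleScale]
  push_cast
  rw [← mul_conj', ← mul_conj']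
  field_simp
  linear_combination (-z) * hrel

end ApolloniusCircle

theorem stmt17_general (n : ℕ) (f : ℂ → ℂ)
    (α : ℂ) (hα : α ∈ ball (0:ℂ) 1) (R : ℝ) (hR0 : 0 < R) (hR1 : R < 1)
    (c : ℂ) (ρ : ℝ) (hρ : 0 < ρ)
    (hΓ : sphere c ρ = (fun ζ => (α - ζ) / (1 - starRingEnd ℂ α * ζ)) '' sphere (0:ℂ) R) :
    (∃ g : ℂ → ℂ, ContinuousOn g (closedBall c ρ) ∧ DifferentiableOn ℂ g (ball c ρ) ∧
       ∀ z ∈ sphere c ρ, g z = (z - c) ^ n * f z) ↔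
    (∃ g : ℂ → ℂ, ContinuousOn g (closedBall c ρ) ∧ DifferentiableOn ℂ g (ball c ρ) ∧
       ∀ z ∈ sphere c ρ, g z = (z - α) ^ n * (f z / (1 - (‖z‖ : ℂ)^2) ^ n)) := by
  have hα1 : ‖α‖ < 1 := mem_ball_zero_iff.mp hα
  have hΓ' : ∀ z ∈ sphere c ρ, ‖z‖ < 1 ∧ ‖z - α‖ = R * ‖1 - conj α * z‖ := by
    rw [hΓ]
    rintro _ ⟨w, hw, rfl⟩
    obtain rfl := mem_sphere_zero_iff_norm.mp hw
    exact ⟨norm_mobius_lt_one hα1 hR1, norm_mobius_sub hα1 hR1⟩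
  obtain rfl : c = mobiusCircleScale α R * α := eq_of_sphere_subset_sphere hρ
    fun z hz => mem_sphere_of_norm_sub_eq hα1 hR0.le hR1 (hΓ' z hz).2
  have hdisc : closedBall (mobiusCircleScale α R * α) ρ ⊆ ball 0 1 := by
    rw [← convexHull_sphere_eq_closedBall _ hρ.le, (convex_ball _ _).convexHull_subset_iff]
    exact fun z hz => mem_ball_zero_iff.mpr (hΓ' z hz).1
  have hμ : (mobiusCircleScale α R : ℂ) ≠ 0 :=
    ofReal_ne_zero.mpr (mobiusCircleScale_pos hα1 hR0.le hR1).ne'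
  refine HasHolomorphicExtension.iff_of_eqOn_mul
    (h := fun z => (mobiusCircleScale α R * (1 - conj α * z)) ^ n) (by fun_prop)
    (fun z hz => pow_ne_zero _ (mul_ne_zero hμ (one_sub_conj_mul_ne_zero hα1
      (mem_ball_zero_iff.mp (hdisc hz)).le))) fun z hz => ?_
  have hz1 : 1 - (‖z‖ : ℂ) ^ 2 ≠ 0 := by
    exact_mod_cast (sub_pos.mpr (pow_lt_one₀ (norm_nonneg z) (hΓ' z hz).1 two_ne_zero)).ne'
  have hkey := congrArg (· ^ n) (one_sub_norm_sq_mul_sub_center hα1 hR0.le hR1 (hΓ' z hz).2)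
  simp only [mul_pow] at hkey
  simp only [Pi.mul_apply, mul_pow, mul_div_assoc']
  rw [eq_div_iff (pow_ne_zero n hz1)]
  linear_combination f z * hkey

/-- Let `f` be continuous on the closed unit disc, `F(z) = f(z)/(1-|z|²)ⁿ`, and let
`Γ = sphere c ρ` be a circle in `Δ` with hyperbolic center `α`.  Then
`z ↦ (z-c)ⁿ f(z)` extends holomorphically from `Γ` iff `z ↦ (z-α)ⁿ F(z)` does. -/
theorem stmt17 (n : ℕ) (f : ℂ → ℂ) (hf : ContinuousOn f (closedBall (0:ℂ) 1))
    (α : ℂ) (hα : α ∈ ball (0:ℂ) 1) (R : ℝ) (hR0 : 0 < R) (hR1 : R < 1)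
    (c : ℂ) (ρ : ℝ) (hρ : 0 < ρ)
    (hΓ : sphere c ρ = (fun ζ => (α - ζ) / (1 - starRingEnd ℂ α * ζ)) '' sphere (0:ℂ) R) :
    (∃ g : ℂ → ℂ, ContinuousOn g (closedBall c ρ) ∧ DifferentiableOn ℂ g (ball c ρ) ∧
       ∀ z ∈ sphere c ρ, g z = (z - c) ^ n * f z) ↔
    (∃ g : ℂ → ℂ, ContinuousOn g (closedBall c ρ) ∧ DifferentiableOn ℂ g (ball c ρ) ∧
       ∀ z ∈ sphere c ρ, g z = (z - α) ^ n * (f z / (1 - (‖z‖ : ℂ)^2) ^ n)) :=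
  stmt17_general n f α hα R hR0 hR1 c ρ hρ hΓ
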